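/- Let v_L > 0, y_L < 0, y_L² > 4v_L, R_L = √(y_L²−4v_L), and let v > v_L with y = v(y_L − R_L)/(2v_L) + (y_L + R_L)/2 (a point on the 1-shock curve S₁ through (v_L, y_L)) satisfying y² > 4v. Then the 1-shock speed s₁ = (−y_L − R_L)/(2v·v_L) satisfies the Lax admissibility inequalities λ₁(v_L, y_L) > s₁ > λ₁(v, y), where λ₁(v,y) = (−y − √(y²−4v))/(2v²). -/

import Mathlib

/-!
On the 1-shock curve `y² - 4v` is the square of a nonnegative affine function of `v`, so the
numerator `-y - √(y² - 4v)` of `λ₁` keeps the value `c = -y_L - R_L > 0` it has at `v = v_L`.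
Hence `λ₁(v, y) = c / (2v²)`, and `s₁ = c / (2 v v_L)` lies strictly between `c / (2v²)` and
`λ₁(v_L, y_L) = c / (2v_L²)` because `v_L < v`.
-/

/-- First characteristic speed. -/
noncomputable def lam1 (v y : ℝ) : ℝ := (-y - Real.sqrt (y ^ 2 - 4 * v)) / (2 * v ^ 2)

lemma sq_sub_four_mul_eq_sq_on_shock_curve {vL yL RL : ℝ} (v : ℝ) (hvL : vL ≠ 0)
    (hRL : RL ^ 2 = yL ^ 2 - 4 * vL) :
    (v * (yL - RL) / (2 * vL) + (yL + RL) / 2) ^ 2 - 4 * v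
      = ((yL + RL) / 2 + v * (RL - yL) / (2 * vL)) ^ 2 := by
  field_simp
  linear_combination (-4 * vL * v) * hRL

lemma lam1_on_shock_curve {vL yL RL v : ℝ} (hvL : 0 < vL) (hyL : yL ≤ 0) (hRL0 : 0 ≤ RL)
    (hRL : RL ^ 2 = yL ^ 2 - 4 * vL) (hv : vL ≤ v) :
    lam1 v (v * (yL - RL) / (2 * vL) + (yL + RL) / 2) = (-yL - RL) / (2 * v ^ 2) := by
  set R := (yL + RL) / 2 + v * (RL - yL) / (2 * vL) with hR
  have hR_nonneg : 0 ≤ R := by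
    have h : 2 * vL * R = RL * (vL + v) - yL * (v - vL) := by
      rw [hR]; field_simp; ring
    nlinarith
  rw [lam1, sq_sub_four_mul_eq_sq_on_shock_curve v hvL.ne' hRL, Real.sqrt_sq hR_nonneg, hR]
  congr 1
  field_simp
  ring

theorem stmt8_general (vL yL v y RL : ℝ)
    (hvL : 0 < vL) (hyL : yL < 0) (hL : yL ^ 2 > 4 * vL)
    (hRL : RL = Real.sqrt (yL ^ 2 - 4 * vL))
    (hv : vL < v)
    (hy : y = v * (yL - RL) / (2 * vL) + (yL + RL) / 2) :
    lam1 vL yL > (-yL - RL) / (2 * v * vL) ∧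
    (-yL - RL) / (2 * v * vL) > lam1 v y := by
  have hRL0 : 0 ≤ RL := hRL ▸ Real.sqrt_nonneg _
  have hRL2 : RL ^ 2 = yL ^ 2 - 4 * vL := hRL ▸ Real.sq_sqrt (by linarith)
  have hRL_lt : RL < -yL := by
    rw [hRL, Real.sqrt_lt' (by linarith)]
    linarith
  have hc : 0 < -yL - RL := by linarith
  have hlamL : lam1 vL yL = (-yL - RL) / (2 * vL ^ 2) := by rw [lam1, hRL]
  have hlam : lam1 v y = (-yL - RL) / (2 * v ^ 2) :=
    hy ▸ lam1_on_shock_curve hvL hyL.le hRL0 hRL2 hv.le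
  have hv0 : 0 < v := hvL.trans hv
  rw [hlamL, hlam]
  constructor
  · exact div_lt_div_of_pos_left hc (by positivity) (by nlinarith)
  · exact div_lt_div_of_pos_left hc (by positivity) (by nlinarith)

theorem stmt8 (vL yL v y RL : ℝ)
    (hvL : 0 < vL) (hyL : yL < 0) (hL : yL ^ 2 > 4 * vL)
    (hRL : RL = Real.sqrt (yL ^ 2 - 4 * vL))
    (hv : vL < v)
    (hy : y = v * (yL - RL) / (2 * vL) + (yL + RL) / 2)
    (hhyp : y ^ 2 > 4 * v) :
    lam1 vL yL > (-yL - RL) / (2 * v * vL) ∧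
    (-yL - RL) / (2 * v * vL) > lam1 v y :=
  stmt8_general vL yL v y RL hvL hyL hL hRL hv hy
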